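/- Let d be a positive integer, let λ = (λ_1, …, λ_d) ∈ (0, ∞)^d, and fix cut-off integers 1 = τ_0 < τ_1 < ⋯ < τ_k < τ_{k+1} = d+1 partitioning the indices {1, …, d} into consecutive groups. Suppose λ is constant within each group, i.e., λ_i = λ_j whenever i and j lie in the same group [τ_{l−1}, τ_l). Let (λ̂_n) be random vectors converging in probability to λ, and define the grouped estimator λ̃_n(τ) that replaces each coordinate of λ̂_n by the mean of λ̂_n over its group. Then λ̃_n(τ) converges in probability to λ, and consequently, for any sequence (T_n) of real-valued random variables, the grouped p-value p̂_n(τ) = 1 − H(T_n; λ̃_n(τ)) satisfies p̂_n(τ) − p_n → 0 in probability, where p_n = 1 − H(T_n; λ). -/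

import Mathlib

open MeasureTheory ProbabilityTheory Filter

/-- The product of `d` independent standard normal distributions. -/
noncomputable def stdGaussPi (d : ℕ) : Measure (Fin d → ℝ) :=
  Measure.pi fun _ => gaussianReal 0 1

/-- `mixCDF d lam q = H(q; λ) = P(∑ j, λ_j Z_j² ≤ q)` for `Z_1, …, Z_d` IID standard normal. -/
noncomputable def mixCDF (d : ℕ) (lam : Fin d → ℝ) (q : ℝ) : ℝ :=
  (stdGaussPi d {z | ∑ j, lam j * z j ^ 2 ≤ q}).toReal

/-- For cut-offs `τ`, indices `i j : Fin d` (thought of as the 1-based indices `i+1, j+1`)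
lie in the same group iff no cut-off separates them. -/
def sameGroup {d k : ℕ} (τ : Fin (k + 2) → ℕ) (i j : Fin d) : Prop :=
  ∀ l, (τ l ≤ (i : ℕ) + 1 ↔ τ l ≤ (j : ℕ) + 1)

instance {d k : ℕ} (τ : Fin (k + 2) → ℕ) (i j : Fin d) : Decidable (sameGroup τ i j) := by
  unfold sameGroup; infer_instance

/-- The group of a given index. -/
def groupOf {d k : ℕ} (τ : Fin (k + 2) → ℕ) (i : Fin d) : Finset (Fin d) :=
  Finset.univ.filter fun j => sameGroup τ i j

/-!
Averaging over a group on which `λ` is constant does not increase the sup-distance to `λ`, so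
`λ̃ₙ → λ` in probability whenever `λ̂ₙ → λ`. For the p-values it suffices that `H(q; λ') → H(q; λ)`
as `λ' → λ`, uniformly in `q`. If `(1 - η) λ ≤ λ' ≤ (1 + η) λ`, scaling gives
`H(q/(1+η); λ) ≤ H(q; λ') ≤ H(q/(1-η); λ)`, so the error is at most the mass of the mixture on
`(q/(1+η), q/(1-η)]`. For large `q` this is a tail probability; for bounded `q` the interval is short,
and an interval of length `L` has mass at most `√(L/λᵢ)`: given the other coordinates it confines
`Zᵢ` to two intervals of total length at most `2√(L/λᵢ)`, where the Gaussian density is below `1/2`.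
-/

open Set
open scoped BigOperators

open Real in
lemma gaussianReal_le_mul_volume (μ : ℝ) {v : NNReal} (hv : v ≠ 0) (s : Set ℝ) :
    gaussianReal μ v s ≤ ENNReal.ofReal (√(2 * π * v))⁻¹ * volume s := by
  rw [gaussianReal_apply μ hv, ← setLIntegral_const]
  refine lintegral_mono fun x => ENNReal.ofReal_le_ofReal ?_
  rw [gaussianPDFReal]
  refine mul_le_of_le_one_right (by positivity) (exp_le_one_iff.2 ?_)
  exact div_nonpos_of_nonpos_of_nonneg (neg_nonpos.2 (sq_nonneg _)) (by positivity)

lemma Real.sqrt_le_sqrt_add_sqrt_sub (x y : ℝ) : √x ≤ √y + √(x - y) := by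
  rcases le_total x y with hxy | hyx
  · linarith [Real.sqrt_le_sqrt hxy, Real.sqrt_nonneg (x - y)]
  rcases le_total y 0 with hy | hy
  · linarith [Real.sqrt_le_sqrt (by linarith : x ≤ x - y), Real.sqrt_nonneg y]
  rw [Real.sqrt_le_left (by positivity), add_sq, Real.sq_sqrt hy, Real.sq_sqrt (by linarith)]
  nlinarith [Real.sqrt_nonneg y, Real.sqrt_nonneg (x - y)]

open Real in
lemma gaussianReal_preimage_mul_sq_Ioc_le {c : ℝ} (hc : 0 < c) (p q : ℝ) :
    gaussianReal 0 1 ((fun x => c * x ^ 2) ⁻¹' Ioc p q) ≤ ENNReal.ofReal √((q - p) / c) := by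
  set s := √(p / c)
  set w := √(q / c)
  have hsub : (fun x => c * x ^ 2) ⁻¹' Ioc p q ⊆ Icc (-w) (-s) ∪ Icc s w := by
    rintro x ⟨hpx, hxq⟩
    have hs : s ≤ |x| := by
      rw [← sqrt_sq_eq_abs]; exact sqrt_le_sqrt ((div_le_iff₀' hc).2 hpx.le)
    have hw : |x| ≤ w := by
      rw [← sqrt_sq_eq_abs]; exact sqrt_le_sqrt ((le_div_iff₀' hc).2 hxq)
    rcases abs_cases x with ⟨hx, -⟩ | ⟨hx, -⟩ <;> rw [hx] at hs hw
    · exact Or.inr ⟨hs, hw⟩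
    · exact Or.inl ⟨by linarith, by linarith⟩
  have hws : w - s ≤ √((q - p) / c) := by
    have := sqrt_le_sqrt_add_sqrt_sub (q / c) (p / c)
    rw [sub_div]; linarith
  have hπ : (√(2 * π))⁻¹ ≤ 1 / 2 := by
    rw [inv_le_comm₀ (by positivity) (by norm_num), le_sqrt (by norm_num) (by positivity)]
    nlinarith [pi_gt_three]
  have hbound : (√(2 * π))⁻¹ * (w - s) ≤ √((q - p) / c) / 2 := by
    rcases le_total (w - s) 0 with h | h
    · nlinarith [sqrt_nonneg ((q - p) / c), inv_nonneg.2 (sqrt_nonneg (2 * π))]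
    · nlinarith
  have hγ : ∀ t, gaussianReal 0 1 t ≤ ENNReal.ofReal (√(2 * π))⁻¹ * volume t := by
    simpa using gaussianReal_le_mul_volume 0 one_ne_zero
  calc gaussianReal 0 1 ((fun x => c * x ^ 2) ⁻¹' Ioc p q)
      ≤ gaussianReal 0 1 (Icc (-w) (-s)) + gaussianReal 0 1 (Icc s w) :=
        (measure_mono hsub).trans (measure_union_le _ _)
    _ ≤ ENNReal.ofReal (√((q - p) / c) / 2) + ENNReal.ofReal (√((q - p) / c) / 2) := by
        refine add_le_add ((hγ _).trans ?_) ((hγ _).trans ?_) <;>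
          rw [volume_Icc, ← ENNReal.ofReal_mul (by positivity)] <;>
          exact ENNReal.ofReal_le_ofReal (by linarith)
    _ = ENNReal.ofReal √((q - p) / c) := by
        rw [← ENNReal.ofReal_add (by positivity) (by positivity), add_halves]

instance (d : ℕ) : IsProbabilityMeasure (stdGaussPi d) := by
  unfold stdGaussPi; infer_instance

lemma measurable_weightedSqSum {d : ℕ} (lam : Fin d → ℝ) :
    Measurable fun z : Fin d → ℝ => ∑ j, lam j * z j ^ 2 := by
  fun_prop

noncomputable def mixLaw (d : ℕ) (lam : Fin d → ℝ) : Measure ℝ :=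
  (stdGaussPi d).map fun z => ∑ j, lam j * z j ^ 2

instance (d : ℕ) (lam : Fin d → ℝ) : IsProbabilityMeasure (mixLaw d lam) :=
  Measure.isProbabilityMeasure_map (measurable_weightedSqSum lam).aemeasurable

lemma mixCDF_eq_cdf (d : ℕ) (lam : Fin d → ℝ) : mixCDF d lam = cdf (mixLaw d lam) := by
  ext q
  rw [cdf_eq_real, measureReal_def, mixLaw, Measure.map_apply (measurable_weightedSqSum lam)
    measurableSet_Iic]
  rfl

lemma mixLaw_Ioc_le {m : ℕ} (lam : Fin (m + 1) → ℝ) {i : Fin (m + 1)} (hi : 0 < lam i)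
    (a b : ℝ) : mixLaw (m + 1) lam (Ioc a b) ≤ ENNReal.ofReal √((b - a) / lam i) := by
  set γ := gaussianReal 0 1
  set e := MeasurableEquiv.piFinSuccAbove (fun _ : Fin (m + 1) => ℝ) i
  have hS := measurable_weightedSqSum lam
  rw [mixLaw, Measure.map_apply hS measurableSet_Ioc, stdGaussPi,
    ← ((measurePreserving_piFinSuccAbove (fun _ => γ) i).symm).measure_preimage
      (hS measurableSet_Ioc).nullMeasurableSet,
    Measure.prod_apply_symm (e.symm.measurable (hS measurableSet_Ioc))]
  refine (lintegral_mono (g := fun _ => ENNReal.ofReal √((b - a) / lam i)) fun y => ?_).trans_eq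
    (by simp)
  set r := ∑ j, lam (i.succAbove j) * y j ^ 2
  have hslice : (fun x => (x, y)) ⁻¹' (e.symm ⁻¹' ((fun z => ∑ j, lam j * z j ^ 2) ⁻¹' Ioc a b))
      = (fun x => lam i * x ^ 2) ⁻¹' Ioc (a - r) (b - r) := by
    ext x
    simp only [mem_preimage, e, MeasurableEquiv.piFinSuccAbove_symm_apply, Fin.insertNthEquiv,
      Equiv.coe_fn_mk, Fin.sum_univ_succAbove _ i, Fin.insertNth_apply_same,
      Fin.insertNth_apply_succAbove, r]
    exact add_mem_Ioc_iff_left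
  rw [hslice]
  convert gaussianReal_preimage_mul_sq_Ioc_le hi (a - r) (b - r) using 3
  ring

lemma mixCDF_antitone {d : ℕ} {lam lam' : Fin d → ℝ} (h : lam ≤ lam') (q : ℝ) :
    mixCDF d lam' q ≤ mixCDF d lam q :=
  ENNReal.toReal_mono (measure_ne_top _ _) <| measure_mono fun z hz =>
    (Finset.sum_le_sum fun j _ => mul_le_mul_of_nonneg_right (h j) (sq_nonneg (z j))).trans hz

lemma mixCDF_smul {d : ℕ} (lam : Fin d → ℝ) {c : ℝ} (hc : 0 < c) (q : ℝ) :
    mixCDF d (c • lam) q = mixCDF d lam (q / c) := by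
  simp only [mixCDF, Pi.smul_apply, smul_eq_mul, mul_assoc, ← Finset.mul_sum, le_div_iff₀' hc]

lemma abs_mixCDF_sub_le {d : ℕ} {lam lam' : Fin d → ℝ} (hlam : 0 ≤ lam) {η : ℝ} (hη₀ : 0 ≤ η)
    (hη₁ : η < 1) (hlo : (1 - η) • lam ≤ lam') (hhi : lam' ≤ (1 + η) • lam) (q : ℝ) :
    |mixCDF d lam' q - mixCDF d lam q| ≤
      mixCDF d lam (q / (1 - η)) - mixCDF d lam (q / (1 + η)) := by
  have hlo' : (1 - η) • lam ≤ lam := fun i => by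
    simpa using mul_le_of_le_one_left (hlam i) (by linarith : 1 - η ≤ 1)
  have hhi' : lam ≤ (1 + η) • lam := fun i => by
    simpa using le_mul_of_one_le_left (hlam i) (by linarith : 1 ≤ 1 + η)
  have h₁ := mixCDF_antitone hlo q
  have h₂ := mixCDF_antitone hhi q
  have h₃ := mixCDF_antitone hlo' q
  have h₄ := mixCDF_antitone hhi' q
  rw [mixCDF_smul lam (by linarith)] at h₁ h₂ h₃ h₄
  rw [abs_le]
  constructor <;> linarith

lemma mixCDF_le_one (d : ℕ) (lam : Fin d → ℝ) (q : ℝ) : mixCDF d lam q ≤ 1 := by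
  rw [mixCDF_eq_cdf]; exact cdf_le_one _ q

lemma tendsto_mixCDF_atTop (d : ℕ) (lam : Fin d → ℝ) :
    Tendsto (mixCDF d lam) atTop (nhds 1) := by
  rw [mixCDF_eq_cdf]; exact tendsto_cdf_atTop _

lemma mixCDF_sub_le_sqrt {m : ℕ} (lam : Fin (m + 1) → ℝ) {i : Fin (m + 1)} (hi : 0 < lam i)
    (a b : ℝ) : mixCDF (m + 1) lam b - mixCDF (m + 1) lam a ≤ √((b - a) / lam i) := by
  rw [← ENNReal.ofReal_le_ofReal_iff (Real.sqrt_nonneg _), mixCDF_eq_cdf,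
    ← StieltjesFunction.measure_Ioc, measure_cdf]
  exact mixLaw_Ioc_le lam hi a b

lemma exists_forall_mixCDF_div_sub_le {m : ℕ} (lam : Fin (m + 1) → ℝ) {i : Fin (m + 1)}
    (hi : 0 < lam i) {ε : ℝ} (hε : 0 < ε) :
    ∃ η, 0 < η ∧ η < 1 ∧ ∀ q,
      mixCDF (m + 1) lam (q / (1 - η)) - mixCDF (m + 1) lam (q / (1 + η)) ≤ ε := by
  obtain ⟨M, hM⟩ := eventually_atTop.1 <|
    (tendsto_order.1 (tendsto_mixCDF_atTop (m + 1) lam)).1 (1 - ε) (by linarith)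
  set M' := max M 1
  have hM' : 0 < M' := lt_max_of_lt_right one_pos
  set η := min (1 / 2) (ε ^ 2 * lam i / (4 * M'))
  have hη₀ : 0 < η := lt_min one_half_pos (by positivity)
  have hη₁ : η ≤ 1 / 2 := min_le_left _ _
  refine ⟨η, hη₀, by linarith, fun q => ?_⟩
  by_cases hq : M' ≤ q / (1 + η)
  · have := hM _ ((le_max_left _ _).trans hq)
    have := mixCDF_le_one (m + 1) lam (q / (1 - η))
    linarith
  · have hwidth : q / (1 - η) - q / (1 + η) ≤ ε ^ 2 * lam i := by
      have hsplit : q / (1 - η) - q / (1 + η) = q / (1 + η) * (2 * η / (1 - η)) := by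
        have : 1 - η ≠ 0 := by linarith
        have : 1 + η ≠ 0 := by linarith
        field_simp; ring
      have hfac : 2 * η / (1 - η) ≤ 4 * η := by
        rw [div_le_iff₀ (by linarith)]; nlinarith
      have hη₂ : M' * (4 * η) ≤ ε ^ 2 * lam i := by
        have := min_le_right (1 / 2) (ε ^ 2 * lam i / (4 * M'))
        rw [le_div_iff₀ (by positivity)] at this
        linarith
      rw [hsplit]
      nlinarith [div_nonneg (by linarith : (0 : ℝ) ≤ 2 * η) (by linarith : (0 : ℝ) ≤ 1 - η)]
    calc _ ≤ √((q / (1 - η) - q / (1 + η)) / lam i) := mixCDF_sub_le_sqrt lam hi _ _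
      _ ≤ √(ε ^ 2) := Real.sqrt_le_sqrt ((div_le_iff₀ hi).2 hwidth)
      _ = ε := Real.sqrt_sq hε.le

lemma tendstoUniformly_mixCDF {d : ℕ} {lam : Fin d → ℝ} (hlam : ∀ i, 0 < lam i) :
    TendstoUniformly (mixCDF d) (mixCDF d lam) (nhds lam) := by
  rw [Metric.tendstoUniformly_iff]
  intro ε hε
  cases d with
  | zero =>
    exact .of_forall fun lam' q => by rw [Subsingleton.elim lam' lam, dist_self]; exact hε
  | succ m =>
    obtain ⟨η, hη₀, hη₁, hη⟩ := exists_forall_mixCDF_div_sub_le lam (hlam 0) (half_pos hε)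
    have hnhds : Icc ((1 - η) • lam) ((1 + η) • lam) ∈ nhds lam :=
      pi_Icc_mem_nhds (fun i => by simp only [Pi.smul_apply, smul_eq_mul]; nlinarith [hlam i])
        (fun i => by simp only [Pi.smul_apply, smul_eq_mul]; nlinarith [hlam i])
    filter_upwards [hnhds] with lam' ⟨hlo, hhi⟩ q
    rw [dist_comm, Real.dist_eq]
    exact (abs_mixCDF_sub_le (fun i => (hlam i).le) hη₀.le hη₁ hlo hhi q).trans_lt
      ((hη q).trans_lt (half_lt_self hε))

lemma tendsto_measure_lt_dist_of_tendstoUniformly {Ω ι α β γ : Type*} [MeasurableSpace Ω]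
    {P : Measure Ω} {l : Filter ι} [SeminormedAddCommGroup α] [PseudoMetricSpace γ]
    {F : α → β → γ} {x : α} (hF : TendstoUniformly F (F x) (nhds x)) {X : ι → Ω → α}
    (hX : ∀ ε > 0, Tendsto (fun n => P {ω | ε < ‖X n ω - x‖}) l (nhds 0)) (Y : ι → Ω → β)
    {ε : ℝ} (hε : 0 < ε) :
    Tendsto (fun n => P {ω | ε < dist (F x (Y n ω)) (F (X n ω) (Y n ω))}) l (nhds 0) := by
  obtain ⟨δ, hδ, hclose⟩ := Metric.eventually_nhds_iff.1 (Metric.tendstoUniformly_iff.1 hF ε hε)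
  refine tendsto_of_tendsto_of_tendsto_of_le_of_le tendsto_const_nhds (hX (δ / 2) (half_pos hδ))
    (fun _ => zero_le) fun n => measure_mono fun ω hω => ?_
  by_contra h
  have hXδ : dist (X n ω) x < δ := by
    rw [dist_eq_norm]; exact (not_lt.1 h).trans_lt (half_lt_self hδ)
  exact (hclose hXδ (Y n ω)).not_gt hω

lemma abs_expect_sub_le {ι : Type*} {s : Finset ι} (hs : s.Nonempty) {f : ι → ℝ} {c r : ℝ}
    (h : ∀ i ∈ s, |f i - c| ≤ r) : |(𝔼 i ∈ s, f i) - c| ≤ r := by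
  rw [← Finset.expect_const hs c, ← Finset.expect_sub_distrib]
  exact (Finset.abs_expect_le _ _).trans (Finset.expect_le hs h)

lemma norm_groupMean_sub_le {d k : ℕ} {τ : Fin (k + 2) → ℕ} {lam w w' : Fin d → ℝ}
    (hconst : ∀ i j : Fin d, sameGroup τ i j → lam i = lam j)
    (hw' : ∀ i, w' i = (∑ j ∈ groupOf τ i, w j) / (groupOf τ i).card) :
    ‖w' - lam‖ ≤ ‖w - lam‖ := by
  refine (pi_norm_le_iff_of_nonneg (norm_nonneg _)).2 fun i => ?_
  have hi : i ∈ groupOf τ i := Finset.mem_filter.2 ⟨Finset.mem_univ _, fun _ => Iff.rfl⟩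
  rw [Pi.sub_apply, hw', ← Finset.expect_eq_sum_div_card, Real.norm_eq_abs]
  refine abs_expect_sub_le ⟨i, hi⟩ fun j hj => ?_
  rw [hconst i j (Finset.mem_filter.1 hj).2, ← Real.norm_eq_abs]
  exact norm_le_pi_norm (w - lam) j

theorem stmt13_general {Ω : Type*} [MeasurableSpace Ω] (P : Measure Ω)
    (d : ℕ) (lam : Fin d → ℝ) (hlampos : ∀ i, 0 < lam i)
    (k : ℕ) (τ : Fin (k + 2) → ℕ)
    -- λ is constant within each group
    (hconst : ∀ i j : Fin d, sameGroup τ i j → lam i = lam j)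
    (lamHat : ℕ → Ω → Fin d → ℝ)
    (hprob : ∀ ε > 0, Tendsto (fun n => P {ω | ε < ‖lamHat n ω - lam‖}) atTop (nhds 0))
    -- the grouped estimator: each coordinate is replaced by the mean over its group
    (lamTilde : ℕ → Ω → Fin d → ℝ)
    (hGroup : ∀ n ω i,
      lamTilde n ω i = (∑ j ∈ groupOf τ i, lamHat n ω j) / (groupOf τ i).card)
    (T : ℕ → Ω → ℝ) :
    (∀ ε > 0, Tendsto (fun n => P {ω | ε < ‖lamTilde n ω - lam‖}) atTop (nhds 0)) ∧
    (∀ ε > 0,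
      Tendsto
        (fun n => P {ω |
          ε < |(1 - mixCDF d (lamTilde n ω) (T n ω)) - (1 - mixCDF d lam (T n ω))|})
        atTop (nhds 0)) := by
  have htilde : ∀ ε > 0, Tendsto (fun n => P {ω | ε < ‖lamTilde n ω - lam‖}) atTop (nhds 0) :=
    fun ε hε => tendsto_of_tendsto_of_tendsto_of_le_of_le tendsto_const_nhds (hprob ε hε)
      (fun _ => zero_le) fun n => measure_mono fun ω hω =>
        hω.trans_le (norm_groupMean_sub_le hconst (hGroup n ω))
  refine ⟨htilde, fun ε hε => ?_⟩
  simpa only [sub_sub_sub_cancel_left, Real.dist_eq] using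
    tendsto_measure_lt_dist_of_tendstoUniformly (tendstoUniformly_mixCDF hlampos) htilde T hε

theorem stmt13 {Ω : Type*} [MeasurableSpace Ω] (P : Measure Ω) [IsProbabilityMeasure P]
    (d : ℕ) (hd : 0 < d) (lam : Fin d → ℝ) (hlampos : ∀ i, 0 < lam i)
    (k : ℕ) (τ : Fin (k + 2) → ℕ) (hτmono : StrictMono τ)
    (hτ0 : τ 0 = 1) (hτlast : τ (Fin.last (k + 1)) = d + 1)
    -- λ is constant within each group
    (hconst : ∀ i j : Fin d, sameGroup τ i j → lam i = lam j)
    (lamHat : ℕ → Ω → Fin d → ℝ) (hlamHat : ∀ n, Measurable (lamHat n))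
    (hprob : ∀ ε > 0, Tendsto (fun n => P {ω | ε < ‖lamHat n ω - lam‖}) atTop (nhds 0))
    -- the grouped estimator: each coordinate is replaced by the mean over its group
    (lamTilde : ℕ → Ω → Fin d → ℝ)
    (hGroup : ∀ n ω i,
      lamTilde n ω i = (∑ j ∈ groupOf τ i, lamHat n ω j) / (groupOf τ i).card)
    (T : ℕ → Ω → ℝ) (hT : ∀ n, Measurable (T n)) :
    (∀ ε > 0, Tendsto (fun n => P {ω | ε < ‖lamTilde n ω - lam‖}) atTop (nhds 0)) ∧
    (∀ ε > 0,
      Tendsto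
        (fun n => P {ω |
          ε < |(1 - mixCDF d (lamTilde n ω) (T n ω)) - (1 - mixCDF d lam (T n ω))|})
        atTop (nhds 0)) :=
  stmt13_general P d lam hlampos k τ hconst lamHat hprob lamTilde hGroup T
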